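/- Let T be an odd positive integer, c an integer with c ≥ 0, α, ρ real with |α| < 1/2 and |ρ| ≤ (T−1)/(2T), γ real with 0 < γ ≤ T, δ real with |δ| ≤ 1, β ≤ 0 real, and d ∈ 1/2 + ℤ. There is a constant C = C(c,d,T,α,β,γ,δ,ρ) > 0 such that in the circle-method setup: |∫_{−ϑ'}^{ϑ''} z^d·e^{(πz/k)(2n+δ)}·e^{βπ/(kz)}·𝓗_{c,T}(α,γ,ρ,k;z) dφ| ≤ C·(1/(k√n))·(n/k)^{|d|}. -/

import Mathlib

/-!
On the arc `z = k/n - ikφ` one has `Re z = k/n` and `‖z‖² ≤ 5/n`, hence `Re (1/z) ≥ k/5`.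
So the Gaussian factor in the integrand of `𝓗` decays like `exp (-πT x²/(5γ²))` uniformly in
`k` and `z`, while `cosh (π(x+iρ))` stays away from `0` because `|ρ| < 1/2`: `𝓗` is bounded on
the arc. The other factors are at most `3^|d| (n/k)^|d|` (as `k/n ≤ ‖z‖ ≤ 3`), `exp (π(2+|δ|))`
and `1` (as `β ≤ 0`), and the arc has length at most `4/(k√n)`.
-/

open Complex Real MeasureTheory

/-- `𝓗_{c,T}(α,γ,ρ,k;z) = ∫_ℝ (x+iρ)^c·e^{−πTx²/(γ²kz)+2πxα}/cosh(π(x+iρ)) dx`. -/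
noncomputable def mordellH' (T c : ℕ) (α γ ρ : ℝ) (k : ℕ) (z : ℂ) : ℂ :=
  ∫ x : ℝ, ((x : ℂ) + I * ρ) ^ c *
      Complex.exp (-(π : ℂ) * T * x ^ 2 / (γ ^ 2 * k * z) + 2 * π * x * α) /
    Complex.cosh (π * ((x : ℂ) + I * ρ))

lemma abs_cos_le_norm_cosh_add_mul_I (x y : ℝ) : |Real.cos y| ≤ ‖Complex.cosh (x + y * I)‖ := by
  have hre : (Complex.cosh (x + y * I)).re = Real.cosh x * Real.cos y := by
    simp [Complex.cosh_add, Complex.cosh_mul_I, Complex.sinh_mul_I, ← Complex.ofReal_cosh,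
      ← Complex.ofReal_cos, ← Complex.ofReal_sinh, ← Complex.ofReal_sin]
  calc |Real.cos y| ≤ Real.cosh x * |Real.cos y| :=
        le_mul_of_one_le_left (abs_nonneg _) (Real.one_le_cosh x)
    _ = |(Complex.cosh (x + y * I)).re| := by
        rw [hre, abs_mul, abs_of_pos (Real.cosh_pos x)]
    _ ≤ _ := Complex.abs_re_le_norm _

lemma norm_pow_le_exp (w : ℂ) (c : ℕ) : ‖w ^ c‖ ≤ rexp (c * ‖w‖) := by
  rw [norm_pow, Real.exp_nat_mul]
  gcongr
  linarith [Real.add_one_le_exp ‖w‖]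

lemma neg_mul_sq_add_mul_abs_le {a : ℝ} (ha : 0 < a) (b x : ℝ) :
    -a * x ^ 2 + b * |x| ≤ -(a / 2) * x ^ 2 + b ^ 2 / (2 * a) := by
  have h := sq_nonneg (a * |x| - b)
  rw [← sq_abs x]
  field_simp
  nlinarith

lemma re_mordellH'_exponent_le (T : ℕ) {k : ℕ} (hk : 0 < k) {γ L : ℝ} {z : ℂ}
    (hz : (k : ℝ) / L ≤ z⁻¹.re) (α x : ℝ) :
    (-(π : ℂ) * T * x ^ 2 / (γ ^ 2 * k * z) + 2 * π * x * α).re ≤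
      -(π * T / (L * γ ^ 2)) * x ^ 2 + 2 * π * |α| * |x| := by
  have hexp : -(π : ℂ) * T * x ^ 2 / (γ ^ 2 * k * z) + 2 * π * x * α
      = ((-(π * T * x ^ 2 / (γ ^ 2 * k)) : ℝ) : ℂ) * z⁻¹ + ((2 * π * x * α : ℝ) : ℂ) := by
    push_cast; ring
  rw [hexp, Complex.add_re, Complex.re_ofReal_mul, Complex.ofReal_re]
  have hcoef : -(π * T * x ^ 2 / (γ ^ 2 * k)) ≤ 0 := by
    have : 0 ≤ π * T * x ^ 2 / (γ ^ 2 * k) := by positivity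
    linarith
  have hk' : (k : ℝ) ≠ 0 := by positivity
  have hαx : 2 * π * x * α ≤ 2 * π * |α| * |x| := by
    have : x * α ≤ |α| * |x| := by rw [mul_comm, ← abs_mul]; exact le_abs_self _
    nlinarith [Real.pi_pos]
  calc -(π * T * x ^ 2 / (γ ^ 2 * k)) * z⁻¹.re + 2 * π * x * α
      ≤ -(π * T * x ^ 2 / (γ ^ 2 * k)) * (k / L) + 2 * π * |α| * |x| := by
        gcongr ?_ + ?_
        exact mul_le_mul_of_nonpos_left hz hcoef
    _ = -(π * T / (L * γ ^ 2)) * x ^ 2 + 2 * π * |α| * |x| := by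
        field_simp

lemma cos_pi_mul_pos {ρ : ℝ} (hρ : |ρ| < 1 / 2) : 0 < Real.cos (π * ρ) := by
  apply Real.cos_pos_of_mem_Ioo
  constructor <;> nlinarith [abs_lt.mp hρ, Real.pi_pos]

lemma norm_mordellH'_integrand_le (T c : ℕ) {k : ℕ} (hk : 0 < k) (α : ℝ) {ρ : ℝ}
    (hρ : |ρ| < 1 / 2) {γ L : ℝ} {z : ℂ} (hz : (k : ℝ) / L ≤ z⁻¹.re) (x : ℝ) :
    ‖((x : ℂ) + I * ρ) ^ c *
        Complex.exp (-(π : ℂ) * T * x ^ 2 / (γ ^ 2 * k * z) + 2 * π * x * α) /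
      Complex.cosh (π * ((x : ℂ) + I * ρ))‖ ≤
    rexp (c * |ρ|) / Real.cos (π * ρ) *
      rexp (-(π * T / (L * γ ^ 2)) * x ^ 2 + (c + 2 * π * |α|) * |x|) := by
  have hpow : ‖((x : ℂ) + I * ρ) ^ c‖ ≤ rexp (c * (|x| + |ρ|)) := by
    refine (norm_pow_le_exp _ c).trans (Real.exp_le_exp.2 ?_)
    gcongr
    refine (norm_add_le _ _).trans_eq ?_
    simp
  have hcosh : Real.cos (π * ρ) ≤ ‖Complex.cosh (π * ((x : ℂ) + I * ρ))‖ := by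
    have h := abs_cos_le_norm_cosh_add_mul_I (π * x) (π * ρ)
    rw [abs_of_pos (cos_pi_mul_pos hρ)] at h
    convert h using 3
    push_cast; ring
  rw [norm_div, norm_mul, Complex.norm_exp]
  calc _ ≤ rexp (c * (|x| + |ρ|)) *
          rexp (-(π * T / (L * γ ^ 2)) * x ^ 2 + 2 * π * |α| * |x|) / Real.cos (π * ρ) := by
        gcongr
        · exact cos_pi_mul_pos hρ
        · exact re_mordellH'_exponent_le T hk hz α x
    _ = _ := by
        rw [← Real.exp_add, div_mul_eq_mul_div, ← Real.exp_add]
        congr 2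
        ring

lemma exists_norm_mordellH'_le (T c : ℕ) (hT : 0 < T) (α : ℝ) {ρ : ℝ} (hρ : |ρ| < 1 / 2)
    {γ : ℝ} (hγ : γ ≠ 0) {L : ℝ} (hL : 0 < L) :
    ∃ M > 0, ∀ k : ℕ, 0 < k → ∀ z : ℂ, (k : ℝ) / L ≤ z⁻¹.re →
      ‖mordellH' T c α γ ρ k z‖ ≤ M := by
  set a := π * T / (L * γ ^ 2)
  set b := (c : ℝ) + 2 * π * |α|
  have ha : 0 < a := by positivity
  have hcos := cos_pi_mul_pos hρ
  set K := rexp (c * |ρ|) / Real.cos (π * ρ) * rexp (b ^ 2 / (2 * a))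
  refine ⟨K * √(π / (a / 2)), by positivity, fun k hk z hz => ?_⟩
  rw [← integral_gaussian, ← integral_const_mul]
  refine norm_integral_le_of_norm_le ((integrable_exp_neg_mul_sq (by positivity)).const_mul K)
    (ae_of_all _ fun x => (norm_mordellH'_integrand_le T c hk α hρ hz x).trans ?_)
  calc _ ≤ rexp (c * |ρ|) / Real.cos (π * ρ) * rexp (b ^ 2 / (2 * a) + -(a / 2) * x ^ 2) := by
        gcongr _ * rexp ?_
        linarith [neg_mul_sq_add_mul_abs_le ha b x]
    _ = K * rexp (-(a / 2) * x ^ 2) := by rw [Real.exp_add]; ring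

lemma rpow_le_rpow_abs_mul_inv_rpow_abs {a b t : ℝ} (ha : 0 < a) (hat : a ≤ t) (htb : t ≤ b)
    (ha1 : a ≤ 1) (hb1 : 1 ≤ b) (d : ℝ) : t ^ d ≤ b ^ |d| * a⁻¹ ^ |d| := by
  rcases le_or_gt 0 d with hd | hd
  · calc t ^ d ≤ b ^ d := Real.rpow_le_rpow (ha.le.trans hat) htb hd
      _ = b ^ |d| * 1 := by rw [abs_of_nonneg hd, mul_one]
      _ ≤ b ^ |d| * a⁻¹ ^ |d| := by
        gcongr
        exact Real.one_le_rpow ((one_le_inv₀ ha).2 ha1) (abs_nonneg d)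
  · calc t ^ d ≤ a ^ d := Real.rpow_le_rpow_of_nonpos ha hat hd.le
      _ = 1 * a⁻¹ ^ |d| := by
        rw [abs_of_neg hd, Real.inv_rpow ha.le, ← Real.rpow_neg ha.le, neg_neg, one_mul]
      _ ≤ b ^ |d| * a⁻¹ ^ |d| := by
        gcongr
        exact Real.one_le_rpow hb1 (abs_nonneg d)

lemma norm_exp_ofReal_div_le_one {s : ℝ} (hs : s ≤ 0) {z : ℂ} (hz : 0 ≤ z.re) :
    ‖cexp (s / z)‖ ≤ 1 := by
  rw [Complex.norm_exp, Real.exp_le_one_iff, Complex.div_re]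
  simpa using div_nonpos_of_nonpos_of_nonneg (mul_nonpos_of_nonpos_of_nonneg hs hz)
    (Complex.normSq_nonneg z)

lemma one_div_mul_natSqrt_le {n : ℕ} (hn : 1 ≤ n) {k : ℝ} (hk : 0 < k) :
    1 / (k * Nat.sqrt n) ≤ 2 / (k * √n) := by
  have hN : (1 : ℝ) ≤ Nat.sqrt n := by exact_mod_cast Nat.sqrt_pos.2 hn
  rw [div_le_div_iff₀ (by positivity) (by positivity)]
  nlinarith [Real.real_sqrt_lt_nat_sqrt_succ (a := n)]

lemma abs_le_of_mem_uIoc_neg {ϑ₁ ϑ₂ u φ : ℝ} (h₁ : 0 ≤ ϑ₁) (h₂ : 0 ≤ ϑ₂) (h₁u : ϑ₁ ≤ u)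
    (h₂u : ϑ₂ ≤ u) (hφ : φ ∈ Set.uIoc (-ϑ₁) ϑ₂) : |φ| ≤ u := by
  rw [Set.uIoc_of_le (by linarith)] at hφ
  exact abs_le.2 ⟨by linarith [hφ.1], by linarith [hφ.2]⟩

section ArcPoint

variable {z : ℂ} {k n : ℝ}

lemma normSq_le_of_re_eq (hn : 0 < n) (hk : 0 ≤ k) (hkn : k ≤ √n) (hre : z.re = k / n)
    (him : |z.im| ≤ 2 / √n) : normSq z ≤ 5 / n := by
  have hre2 : z.re ^ 2 ≤ 1 / n := by
    have hk2 : k ^ 2 ≤ n := by simpa [Real.sq_sqrt hn.le] using pow_le_pow_left₀ hk hkn 2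
    rw [hre, div_pow, div_le_div_iff₀ (by positivity) hn]
    nlinarith
  have him2 : z.im ^ 2 ≤ 4 / n := by
    calc z.im ^ 2 = |z.im| ^ 2 := (sq_abs _).symm
      _ ≤ (2 / √n) ^ 2 := by gcongr
      _ = 4 / n := by rw [div_pow, Real.sq_sqrt hn.le]; norm_num
  calc normSq z = z.re ^ 2 + z.im ^ 2 := by rw [Complex.normSq_apply]; ring
    _ ≤ 1 / n + 4 / n := add_le_add hre2 him2
    _ = 5 / n := by ring

lemma le_re_inv_of_re_eq (hn : 0 < n) (hk : 0 < k) (hkn : k ≤ √n) (hre : z.re = k / n)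
    (him : |z.im| ≤ 2 / √n) : k / 5 ≤ z⁻¹.re := by
  have hpos : 0 < normSq z :=
    lt_of_lt_of_le (by rw [hre]; positivity) (Complex.re_sq_le_normSq z)
  calc k / 5 = (k / n) / (5 / n) := by field_simp
    _ ≤ (k / n) / normSq z :=
      div_le_div_of_nonneg_left (by positivity) hpos (normSq_le_of_re_eq hn hk.le hkn hre him)
    _ = z⁻¹.re := by rw [Complex.inv_re, hre]

lemma norm_cpow_le_of_re_eq (hk : 1 ≤ k) (hkn : k ≤ √n) (hre : z.re = k / n)
    (him : |z.im| ≤ 2 / √n) (d : ℝ) : ‖z ^ (d : ℂ)‖ ≤ 3 ^ |d| * (n / k) ^ |d| := by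
  have hn : 1 ≤ n := Real.one_le_sqrt.1 (hk.trans hkn)
  have hkn' : k ≤ n := hkn.trans (Real.sqrt_le_self_iff.2 (Or.inr hn))
  have hnorm : ‖z‖ ^ 2 ≤ 3 ^ 2 := by
    rw [← Complex.normSq_eq_norm_sq]
    have := normSq_le_of_re_eq (by positivity) (by positivity) hkn hre him
    have : 5 / n ≤ 5 := div_le_self (by norm_num) hn
    linarith
  rw [Complex.norm_cpow_real, ← inv_div]
  exact rpow_le_rpow_abs_mul_inv_rpow_abs (by positivity) (hre ▸ Complex.re_le_norm z)
    (pow_le_pow_iff_left₀ (norm_nonneg _) (by norm_num) two_ne_zero |>.1 hnorm)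
    ((div_le_one (by positivity)).2 hkn') (by norm_num) d

lemma norm_exp_mul_le_of_re_eq (hk : k ≠ 0) (hn : 1 ≤ n) (hre : z.re = k / n) (δ : ℝ) :
    ‖cexp (π * z / k * (2 * n + δ))‖ ≤ rexp (π * (2 + |δ|)) := by
  have hexp : (π : ℂ) * z / k * (2 * n + δ) = ((π / k * (2 * n + δ) : ℝ) : ℂ) * z := by
    push_cast; ring
  rw [Complex.norm_exp, Real.exp_le_exp, hexp, Complex.re_ofReal_mul, hre]
  have hδ : δ / n ≤ |δ| :=
    (div_le_div_of_nonneg_right (le_abs_self δ) (by positivity)).trans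
      (div_le_self (abs_nonneg δ) hn)
  calc π / k * (2 * n + δ) * (k / n) = π * (2 + δ / n) := by field_simp
    _ ≤ π * (2 + |δ|) := by gcongr

end ArcPoint

lemma norm_circle_integrand_le {n k : ℕ} (hk : 1 ≤ k) (hkn : (k : ℝ) ≤ √n) {φ : ℝ}
    (hφ : |φ| ≤ 2 / (k * √n)) (δ : ℝ) {β : ℝ} (hβ : β ≤ 0) (d : ℝ) {H : ℂ → ℂ} {M : ℝ}
    (hH : ∀ z : ℂ, (k : ℝ) / 5 ≤ z⁻¹.re → ‖H z‖ ≤ M) :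
    ‖((k : ℂ) / n - I * k * φ) ^ (d : ℂ) *
        cexp (π * ((k : ℂ) / n - I * k * φ) / k * (2 * n + δ)) *
        cexp (β * π / (k * ((k : ℂ) / n - I * k * φ))) * H ((k : ℂ) / n - I * k * φ)‖ ≤
      3 ^ |d| * ((n : ℝ) / k) ^ |d| * rexp (π * (2 + |δ|)) * M := by
  set z := (k : ℂ) / n - I * k * φ
  have hk1 : (1 : ℝ) ≤ k := by exact_mod_cast hk
  have hn : (1 : ℝ) ≤ n := Real.one_le_sqrt.1 (hk1.trans hkn)
  have hre : z.re = k / n := by simp [z]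
  have him : |z.im| ≤ 2 / √n :=
    calc |z.im| = k * |φ| := by simp [z, abs_mul]
      _ ≤ k * (2 / (k * √n)) := by gcongr
      _ = 2 / √n := by field_simp
  have hexp := norm_exp_mul_le_of_re_eq (by positivity) hn hre δ
  simp only [Complex.ofReal_natCast] at hexp
  have hβexp : (β : ℂ) * π / (k * z) = ((β * π / k : ℝ) : ℂ) / z := by push_cast; rw [div_div]
  calc _ ≤ 3 ^ |d| * ((n : ℝ) / k) ^ |d| * rexp (π * (2 + |δ|)) * 1 * M := by
        rw [norm_mul, norm_mul, norm_mul, hβexp]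
        gcongr
        · exact norm_cpow_le_of_re_eq hk1 hkn hre him d
        · exact norm_exp_ofReal_div_le_one
            (div_nonpos_of_nonpos_of_nonneg (mul_nonpos_of_nonpos_of_nonneg hβ pi_pos.le)
              (Nat.cast_nonneg k)) (by rw [hre]; positivity)
        · exact hH z (le_re_inv_of_re_eq (by positivity) (by positivity) hkn hre him)
    _ = _ := by ring

theorem circle_integral_H_beta_nonpos_general (T : ℕ) (hTpos : 0 < T)
    (c : ℕ) (α ρ : ℝ) (hρ : |ρ| ≤ ((T : ℝ) - 1) / (2 * T))
    (γ : ℝ) (hγ : 0 < γ) (δ : ℝ)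
    (β : ℝ) (hβ : β ≤ 0) (d : ℝ) :
    ∃ C > 0, ∀ n : ℕ, 2 ≤ n → ∀ k : ℕ, 1 ≤ k → k ≤ Nat.sqrt n →
      ∀ ϑ₁ ϑ₂ : ℝ,
        1 / (2 * k * (Nat.sqrt n : ℝ)) ≤ ϑ₁ → ϑ₁ ≤ 1 / (k * (Nat.sqrt n : ℝ)) →
        1 / (2 * k * (Nat.sqrt n : ℝ)) ≤ ϑ₂ → ϑ₂ ≤ 1 / (k * (Nat.sqrt n : ℝ)) →
        ‖
            (∫ φ : ℝ in (-ϑ₁)..ϑ₂,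
              ((k : ℂ) / n - I * k * φ) ^ (d : ℂ) *
                Complex.exp (π * ((k : ℂ) / n - I * k * φ) / k * (2 * n + δ)) *
                Complex.exp (β * π / (k * ((k : ℂ) / n - I * k * φ))) *
                mordellH' T c α γ ρ k ((k : ℂ) / n - I * k * φ))‖ ≤
          C * (1 / (k * Real.sqrt n)) * ((n : ℝ) / k) ^ |d| := by
  have hρ' : |ρ| < 1 / 2 := hρ.trans_lt <| by
    rw [div_lt_div_iff₀ (by positivity) (by norm_num)]
    linarith
  obtain ⟨M, hM, hH⟩ := exists_norm_mordellH'_le T c hTpos α hρ' hγ.ne' (L := 5) (by norm_num)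
  refine ⟨4 * 3 ^ |d| * rexp (π * (2 + |δ|)) * M, by positivity, ?_⟩
  intro n hn k hk hkN ϑ₁ ϑ₂ hϑ₁ hϑ₁' hϑ₂ hϑ₂'
  have hkn : (k : ℝ) ≤ √n := (Nat.cast_le.2 hkN).trans Real.nat_sqrt_le_real_sqrt
  have harc := one_div_mul_natSqrt_le (n := n) (by omega) (k := k) (by positivity)
  have hϑ₁0 : 0 ≤ ϑ₁ := le_trans (by positivity) hϑ₁
  have hϑ₂0 : 0 ≤ ϑ₂ := le_trans (by positivity) hϑ₂
  calc _ ≤ 3 ^ |d| * ((n : ℝ) / k) ^ |d| * rexp (π * (2 + |δ|)) * M * |ϑ₂ - -ϑ₁| :=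
        intervalIntegral.norm_integral_le_of_norm_le_const fun φ hφ =>
          norm_circle_integrand_le hk hkn
            ((abs_le_of_mem_uIoc_neg hϑ₁0 hϑ₂0 hϑ₁' hϑ₂' hφ).trans harc) δ hβ d (hH k hk)
    _ ≤ 3 ^ |d| * ((n : ℝ) / k) ^ |d| * rexp (π * (2 + |δ|)) * M * (2 * (2 / (k * √n))) := by
        rw [abs_of_nonneg (a := ϑ₂ - -ϑ₁) (by linarith)]
        gcongr
        linarith
    _ = _ := by ring

/-- For `β ≤ 0`, the circle-method integral of `z^d·e^{(πz/k)(2n+δ)}·e^{βπ/(kz)}·𝓗_{c,T}`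
is `O((1/(k√n))·(n/k)^{|d|})`. -/
theorem circle_integral_H_beta_nonpos (T : ℕ) (hT : Odd T) (hTpos : 0 < T)
    (c : ℕ) (α ρ : ℝ) (hα : |α| < 1 / 2) (hρ : |ρ| ≤ ((T : ℝ) - 1) / (2 * T))
    (γ : ℝ) (hγ : 0 < γ) (hγT : γ ≤ T) (δ : ℝ) (hδ : |δ| ≤ 1)
    (β : ℝ) (hβ : β ≤ 0) (d : ℝ) (hd : ∃ m : ℤ, d = m + 1 / 2) :
    ∃ C > 0, ∀ n : ℕ, 2 ≤ n → ∀ k : ℕ, 1 ≤ k → k ≤ Nat.sqrt n →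
      ∀ ϑ₁ ϑ₂ : ℝ,
        1 / (2 * k * (Nat.sqrt n : ℝ)) ≤ ϑ₁ → ϑ₁ ≤ 1 / (k * (Nat.sqrt n : ℝ)) →
        1 / (2 * k * (Nat.sqrt n : ℝ)) ≤ ϑ₂ → ϑ₂ ≤ 1 / (k * (Nat.sqrt n : ℝ)) →
        ‖
            (∫ φ : ℝ in (-ϑ₁)..ϑ₂,
              ((k : ℂ) / n - I * k * φ) ^ (d : ℂ) *
                Complex.exp (π * ((k : ℂ) / n - I * k * φ) / k * (2 * n + δ)) *
                Complex.exp (β * π / (k * ((k : ℂ) / n - I * k * φ))) *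
                mordellH' T c α γ ρ k ((k : ℂ) / n - I * k * φ))‖ ≤
          C * (1 / (k * Real.sqrt n)) * ((n : ℝ) / k) ^ |d| :=
  circle_integral_H_beta_nonpos_general T hTpos c α ρ hρ γ hγ δ β hβ d
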